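/- Let r : ℂⁿ → ℝ be a smooth function such that Ω = {z : r(z) < 0} is nonempty, ∇r(z) ≠ 0 whenever r(z) = 0, and r is strictly plurisubharmonic on an open neighborhood of the closure of Ω. Then there exist a constant C > 0 and a smooth plurisubharmonic function φ : Ω → ℝ with 0 ≤ φ ≤ C on Ω such that all eigenvalues of the complex Hessian of φ tend to infinity at every boundary point: for every p ∈ ∂Ω and every M > 0 there is δ > 0 such that L_φ(z;t) ≥ M|t|² for all z ∈ Ω with |z − p| < δ and all t ∈ ℂⁿ. -/

import Mathlib

open MeasureTheory Complex Metric Filter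
noncomputable section

/-- `ℂⁿ` with its Euclidean inner product and norm. -/
abbrev Cn (n : ℕ) := EuclideanSpace ℂ (Fin n)

instance {n : ℕ} : MeasurableSpace (Cn n) := MeasurableSpace.comap (WithLp.ofLp (p := 2)) MeasurableSpace.pi

/-- Lebesgue measure on `ℂⁿ ≅ ℝ^{2n}`. -/
instance {n : ℕ} : MeasureSpace (Cn n) := ⟨(MeasureTheory.Measure.pi fun _ => volume).map (WithLp.toLp 2)⟩

/-- The real coordinate direction indexed by `(j, b)`: the `x_j`-direction if `b = false`,
the `y_j`-direction if `b = true`. -/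
def dir {n : ℕ} (l : Fin n × Bool) : Cn n :=
  EuclideanSpace.single l.1 (if l.2 then Complex.I else 1)

/-- The real partial derivative `∂_l`, `l` ranging over the `2n` real coordinate
directions of `ℂⁿ`. -/
def pd {n : ℕ} {F : Type} [NormedAddCommGroup F] [NormedSpace ℝ F]
    (l : Fin n × Bool) (f : Cn n → F) (z : Cn n) : F :=
  fderiv ℝ f z (dir l)

/-- The real Laplacian `Δφ = Σ_l ∂_l ∂_l φ`. -/
def lap {n : ℕ} (φ : Cn n → ℝ) (z : Cn n) : ℝ :=
  ∑ l : Fin n × Bool, pd l (pd l φ) z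

/-- `|∇φ|²`, the squared norm of the real gradient. -/
def gradSq {n : ℕ} (φ : Cn n → ℝ) (z : Cn n) : ℝ :=
  ∑ l : Fin n × Bool, (pd l φ z)^2

/-- The Levi form `L_u(z;t) = ¼(D²u(z)(t,t) + D²u(z)(it,it))`. -/
def levi {n : ℕ} (u : Cn n → ℝ) (z t : Cn n) : ℝ :=
  (1/4) * (fderiv ℝ (fun w => fderiv ℝ u w t) z t
    + fderiv ℝ (fun w => fderiv ℝ u w (Complex.I • t)) z (Complex.I • t))

/-- The Wirtinger derivative `∂g/∂z_j = ½(∂g/∂x_j − i ∂g/∂y_j)` of a complex-valued function. -/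
def wz {n : ℕ} (j : Fin n) (g : Cn n → ℂ) (z : Cn n) : ℂ :=
  (1/2) * (pd (j, false) g z - Complex.I * pd (j, true) g z)

/-- The Wirtinger derivative `∂g/∂z̄_j = ½(∂g/∂x_j + i ∂g/∂y_j)` of a complex-valued function. -/
def wzbar {n : ℕ} (j : Fin n) (g : Cn n → ℂ) (z : Cn n) : ℂ :=
  (1/2) * (pd (j, false) g z + Complex.I * pd (j, true) g z)

/-- The Wirtinger derivative `∂φ/∂z_j` of a real-valued function. -/
def wzR {n : ℕ} (j : Fin n) (φ : Cn n → ℝ) (z : Cn n) : ℂ :=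
  (1/2) * (Complex.ofReal (pd (j, false) φ z) - Complex.I * Complex.ofReal (pd (j, true) φ z))

/-- The Wirtinger derivative `∂φ/∂z̄_j` of a real-valued function. -/
def wzbarR {n : ℕ} (j : Fin n) (φ : Cn n → ℝ) (z : Cn n) : ℂ :=
  (1/2) * (Complex.ofReal (pd (j, false) φ z) + Complex.I * Complex.ofReal (pd (j, true) φ z))

/-- The complex Hessian coefficient `∂²φ/∂z_j∂z̄_k`. -/
def hess {n : ℕ} (φ : Cn n → ℝ) (j k : Fin n) (z : Cn n) : ℂ :=
  wz j (fun w => wzbarR k φ w) z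

/-- `∂̄*_φ f = −Σ_j (∂f_j/∂z_j − (∂φ/∂z_j) f_j)` for a `(0,1)`-form `f = (f_1,…,f_n)`. -/
def dbarStar {n : ℕ} (φ : Cn n → ℝ) (f : Fin n → Cn n → ℂ) (z : Cn n) : ℂ :=
  -∑ j, (wz j (f j) z - wzR j φ z * f j z)

/-- `f ∈ C_c^∞(Ω)`: smooth, compactly supported, with support inside `Ω`. -/
def SmoothCompSupp {n : ℕ} (Ω : Set (Cn n)) (f : Cn n → ℂ) : Prop :=
  ContDiff ℝ (⊤ : ℕ∞) f ∧ HasCompactSupport f ∧ tsupport f ⊆ Ω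

/-! Take `φ = g ∘ r` with `g s = exp (-√(-s))`. On `s < 0`, `g` takes values in `[0, 1]`, is
increasing and convex, and `g' s = e^{-√(-s)} / (2√(-s)) → ∞` as `s → 0⁻`. The chain rule gives
`L_φ(z;t) = g'(r z) L_r(z;t) + g''(r z) |∂r(z)·t|² ≥ g'(r z) L_r(z;t)`, so `φ` is plurisubharmonic.
Near a boundary point `p`, strict plurisubharmonicity at `p`, continuity of `D²r` and compactness of
the unit sphere give `L_r(z;t) ≥ c|t|²`, hence `L_φ(z;t) ≥ g'(r z) c |t|²`, which blows up. -/

open Topology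

def blowupProfile (s : ℝ) : ℝ := Real.exp (-Real.sqrt (-s))

def blowupProfileDeriv (s : ℝ) : ℝ := Real.exp (-Real.sqrt (-s)) * (2 * Real.sqrt (-s))⁻¹

lemma blowupProfile_nonneg (s : ℝ) : 0 ≤ blowupProfile s := (Real.exp_pos _).le

lemma blowupProfile_le_one (s : ℝ) : blowupProfile s ≤ 1 :=
  Real.exp_le_one_iff.2 (neg_nonpos.2 (Real.sqrt_nonneg _))

lemma hasDerivAt_sqrt_neg {s : ℝ} (hs : s < 0) :
    HasDerivAt (fun x : ℝ => Real.sqrt (-x)) (-(2 * Real.sqrt (-s))⁻¹) s := by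
  rw [show -(2 * Real.sqrt (-s))⁻¹ = 1 / (2 * Real.sqrt (-s)) * -1 by ring]
  exact (Real.hasDerivAt_sqrt (x := -s) (by linarith)).comp s (hasDerivAt_id s).neg

lemma hasDerivAt_blowupProfile {s : ℝ} (hs : s < 0) :
    HasDerivAt blowupProfile (blowupProfileDeriv s) s := by
  have h := (hasDerivAt_sqrt_neg hs).neg.exp
  rwa [neg_neg] at h

lemma blowupProfileDeriv_pos {s : ℝ} (hs : s < 0) : 0 < blowupProfileDeriv s := by
  have : 0 < Real.sqrt (-s) := Real.sqrt_pos.2 (by linarith)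
  unfold blowupProfileDeriv
  positivity

lemma exists_hasDerivAt_blowupProfileDeriv_nonneg {s : ℝ} (hs : s < 0) :
    ∃ d, 0 ≤ d ∧ HasDerivAt blowupProfileDeriv d s := by
  have hsqrt : 0 < Real.sqrt (-s) := Real.sqrt_pos.2 (by linarith)
  have h := (hasDerivAt_blowupProfile hs).mul
    (((hasDerivAt_sqrt_neg hs).const_mul 2).inv (by positivity))
  refine ⟨_, ?_, h⟩
  have : 0 < blowupProfileDeriv s := blowupProfileDeriv_pos hs
  have : 0 ≤ blowupProfile s := blowupProfile_nonneg s
  simp only [mul_neg, neg_neg, Pi.inv_apply]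
  positivity

lemma tendsto_blowupProfileDeriv : Tendsto blowupProfileDeriv (𝓝[<] 0) atTop := by
  have hsqrt : Tendsto (fun s : ℝ => Real.sqrt (-s)) (𝓝[<] 0) (𝓝 0) := by
    simpa using ((continuous_neg.sqrt).tendsto (0 : ℝ)).mono_left nhdsWithin_le_nhds
  refine Tendsto.pos_mul_atTop one_pos (by simpa using hsqrt.neg.rexp) ?_
  refine tendsto_inv_nhdsGT_zero.comp
    (tendsto_nhdsWithin_iff.2 ⟨by simpa using hsqrt.const_mul 2, ?_⟩)
  filter_upwards [self_mem_nhdsWithin] with s (hs : s < 0)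
  exact mul_pos two_pos (Real.sqrt_pos.2 (neg_pos.2 hs))

lemma contDiffAt_blowupProfile {k : WithTop ℕ∞} {s : ℝ} (hs : s < 0) :
    ContDiffAt ℝ k blowupProfile s :=
  Real.contDiff_exp.contDiffAt.comp s
    ((Real.contDiffAt_sqrt (by simp [hs.ne])).comp s contDiffAt_id.neg).neg

section LeviForm

variable {n : ℕ}

lemma levi_zero (u : Cn n → ℝ) (z : Cn n) : levi u z 0 = 0 := by
  simp [levi]

lemma hasFDerivAt_fderiv_apply {u : Cn n → ℝ} {z : Cn n} (hu : ContDiffAt ℝ 2 u z) (v : Cn n) :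
    HasFDerivAt (fun w => fderiv ℝ u w v) ((fderiv ℝ (fderiv ℝ u) z).flip v) z :=
  (ContinuousLinearMap.apply ℝ ℝ v).hasFDerivAt.comp z
    ((hu.fderiv_right (m := 1) (by norm_num)).differentiableAt (by norm_num)).hasFDerivAt

lemma levi_eq {u : Cn n → ℝ} {z : Cn n} (hu : ContDiffAt ℝ 2 u z) (t : Cn n) :
    levi u z t = (1/4) * (fderiv ℝ (fderiv ℝ u) z t t
      + fderiv ℝ (fderiv ℝ u) z (Complex.I • t) (Complex.I • t)) := by
  rw [levi, (hasFDerivAt_fderiv_apply hu t).fderiv,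
    (hasFDerivAt_fderiv_apply hu (Complex.I • t)).fderiv]
  rfl

lemma levi_smul {u : Cn n → ℝ} {z : Cn n} (hu : ContDiffAt ℝ 2 u z) (a : ℝ) (t : Cn n) :
    levi u z (a • t) = a ^ 2 * levi u z t := by
  rw [levi_eq hu, levi_eq hu, smul_comm Complex.I a t]
  simp only [map_smul, smul_apply, smul_eq_mul]
  ring

lemma le_levi_of_forall_sphere {u : Cn n → ℝ} {z : Cn n} {c : ℝ} (hu : ContDiffAt ℝ 2 u z)
    (hc : ∀ t ∈ sphere (0 : Cn n) 1, c ≤ levi u z t) (t : Cn n) :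
    c * ‖t‖ ^ 2 ≤ levi u z t := by
  rcases eq_or_ne t 0 with rfl | ht
  · simp [levi_zero]
  calc c * ‖t‖ ^ 2 ≤ ‖t‖ ^ 2 * levi u z (‖t‖⁻¹ • t) := by
        rw [mul_comm]
        gcongr
        exact hc _ (mem_sphere_zero_iff_norm.2 (norm_smul_inv_norm (𝕜 := ℝ) ht))
    _ = levi u z t := by
        rw [levi_smul hu, ← mul_assoc, ← mul_pow, mul_inv_cancel₀ (norm_ne_zero_iff.2 ht),
          one_pow, one_mul]

lemma continuous_levi {u : Cn n → ℝ} (hu : ContDiff ℝ 2 u) :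
    Continuous fun q : Cn n × Cn n => levi u q.1 q.2 := by
  have hD2 : Continuous (fderiv ℝ (fderiv ℝ u)) :=
    (hu.fderiv_right (m := 1) le_rfl).continuous_fderiv one_ne_zero
  simp_rw [levi_eq hu.contDiffAt]
  fun_prop

lemma exists_pos_eventually_mul_norm_sq_le_levi {u : Cn n → ℝ} (hu : ContDiff ℝ 2 u) {p : Cn n}
    (hp : ∀ t, t ≠ 0 → 0 < levi u p t) :
    ∃ c > 0, ∀ᶠ z in 𝓝 p, ∀ t, c * ‖t‖ ^ 2 ≤ levi u z t := by
  have hF := continuous_levi hu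
  obtain ⟨c, hc, hmin⟩ := (isCompact_sphere (0 : Cn n) 1).exists_forall_le'
    (hF.comp (Continuous.prodMk_right p)).continuousOn
    fun t ht => hp t (ne_zero_of_mem_unit_sphere ⟨t, ht⟩)
  have hnear : ∀ᶠ z in 𝓝 p, ∀ t ∈ sphere (0 : Cn n) 1, c / 2 < levi u z t :=
    (isCompact_sphere (0 : Cn n) 1).eventually_forall_of_forall_eventually fun t ht =>
      (hF.tendsto (p, t)).eventually_const_lt ((half_lt_self hc).trans_le (hmin t ht))
  refine ⟨c / 2, half_pos hc, ?_⟩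
  filter_upwards [hnear] with z hz
  exact le_levi_of_forall_sphere hu.contDiffAt fun t ht => (hz t ht).le

lemma levi_comp {r : Cn n → ℝ} {g g' : ℝ → ℝ} {z : Cn n} {d : ℝ} (hr : ContDiff ℝ 2 r)
    (hg : ∀ᶠ s in 𝓝 (r z), HasDerivAt g (g' s) s) (hg' : HasDerivAt g' d (r z)) (t : Cn n) :
    levi (fun w => g (r w)) z t = g' (r z) * levi r z t
      + d / 4 * (fderiv ℝ r z t ^ 2 + fderiv ℝ r z (Complex.I • t) ^ 2) := by
  have hDr : ∀ w, HasFDerivAt r (fderiv ℝ r w) w :=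
    fun w => (hr.differentiable two_ne_zero w).hasFDerivAt
  have second : ∀ v : Cn n, fderiv ℝ (fun w => fderiv ℝ (fun x => g (r x)) w v) z v
      = g' (r z) * fderiv ℝ (fderiv ℝ r) z v v + d * fderiv ℝ r z v ^ 2 := by
    intro v
    have hfirst : (fun w => fderiv ℝ (fun x => g (r x)) w v)
        =ᶠ[𝓝 z] fun w => g' (r w) * fderiv ℝ r w v := by
      filter_upwards [hr.continuous.continuousAt.eventually hg] with w hw
      have hcomp : HasFDerivAt (fun x => g (r x)) (g' (r w) • fderiv ℝ r w) w :=
        hw.comp_hasFDerivAt w (hDr w)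
      rw [hcomp.fderiv]
      rfl
    have hprod : HasFDerivAt (fun w => g' (r w) * fderiv ℝ r w v) _ z :=
      (hg'.comp_hasFDerivAt z (hDr z)).mul (hasFDerivAt_fderiv_apply hr.contDiffAt v)
    rw [hfirst.fderiv_eq, hprod.fderiv]
    simp only [add_apply, smul_apply, ContinuousLinearMap.flip_apply, Function.comp_apply,
      smul_eq_mul]
    ring
  rw [levi, second, second, levi_eq hr.contDiffAt]
  ring

lemma mul_levi_le_levi_comp {r : Cn n → ℝ} {g g' : ℝ → ℝ} {z : Cn n} {d : ℝ}
    (hr : ContDiff ℝ 2 r) (hg : ∀ᶠ s in 𝓝 (r z), HasDerivAt g (g' s) s)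
    (hg' : HasDerivAt g' d (r z)) (hd : 0 ≤ d) (t : Cn n) :
    g' (r z) * levi r z t ≤ levi (fun w => g (r w)) z t := by
  rw [levi_comp hr hg hg' t]
  exact le_add_of_nonneg_right (by positivity)

end LeviForm

lemma blowupProfileDeriv_mul_levi_le {n : ℕ} {r : Cn n → ℝ} (hr : ContDiff ℝ 2 r) {z : Cn n}
    (hz : r z < 0) (t : Cn n) :
    blowupProfileDeriv (r z) * levi r z t ≤ levi (fun w => blowupProfile (r w)) z t := by
  obtain ⟨d, hd, hg'⟩ := exists_hasDerivAt_blowupProfileDeriv_nonneg hz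
  refine mul_levi_le_levi_comp hr ?_ hg' hd t
  filter_upwards [Iio_mem_nhds hz] with s hs using hasDerivAt_blowupProfile hs

lemma eventually_mul_norm_sq_le_levi_blowupProfile {n : ℕ} {r : Cn n → ℝ} (hr : ContDiff ℝ 2 r)
    {p : Cn n} (hrp : r p = 0) (hp : ∀ t, t ≠ 0 → 0 < levi r p t) (M : ℝ) :
    ∀ᶠ z in 𝓝[{z | r z < 0}] p, ∀ t,
      M * ‖t‖ ^ 2 ≤ levi (fun w => blowupProfile (r w)) z t := by
  obtain ⟨c, hc, hcp⟩ := exists_pos_eventually_mul_norm_sq_le_levi hr hp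
  have hr0 : Tendsto r (𝓝[{z | r z < 0}] p) (𝓝[<] 0) :=
    tendsto_nhdsWithin_iff.2 ⟨hrp ▸ hr.continuous.continuousWithinAt, self_mem_nhdsWithin⟩
  filter_upwards [hr0.eventually (tendsto_blowupProfileDeriv.eventually_ge_atTop (M / c)),
    nhdsWithin_le_nhds hcp, self_mem_nhdsWithin] with z hzM hzc (hz : r z < 0) t
  calc M * ‖t‖ ^ 2 = M / c * (c * ‖t‖ ^ 2) := by field_simp
    _ ≤ blowupProfileDeriv (r z) * levi r z t :=
        mul_le_mul hzM (hzc t) (by positivity) (blowupProfileDeriv_pos hz).le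
    _ ≤ levi (fun w => blowupProfile (r w)) z t := blowupProfileDeriv_mul_levi_le hr hz t

theorem stmt11_general {n : ℕ} (r : Cn n → ℝ) (hr : ContDiff ℝ (⊤ : ℕ∞) r)
    (Ω : Set (Cn n)) (hΩdef : Ω = {z | r z < 0})
    (U : Set (Cn n)) (hclU : closure Ω ⊆ U)
    (hspsh : ∀ z ∈ U, ∀ t : Cn n, t ≠ 0 → 0 < levi r z t) :
    ∃ C : ℝ, 0 < C ∧ ∃ φ : Cn n → ℝ,
      ContDiffOn ℝ (⊤ : ℕ∞) φ Ω ∧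
      (∀ z ∈ Ω, 0 ≤ φ z ∧ φ z ≤ C) ∧
      (∀ z ∈ Ω, ∀ t : Cn n, 0 ≤ levi φ z t) ∧
      (∀ p ∈ frontier Ω, ∀ M : ℝ, 0 < M → ∃ δ : ℝ, 0 < δ ∧
        ∀ z ∈ Ω, ‖z - p‖ < δ → ∀ t : Cn n, M * ‖t‖^2 ≤ levi φ z t) := by
  subst hΩdef
  have hr2 : ContDiff ℝ 2 r := hr.of_le (by norm_cast)
  refine ⟨1, one_pos, fun z => blowupProfile (r z), fun z (hz : r z < 0) =>
    ((contDiffAt_blowupProfile hz).comp z hr.contDiffAt).contDiffWithinAt,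
    fun z _ => ⟨blowupProfile_nonneg _, blowupProfile_le_one _⟩, ?_, ?_⟩
  · intro z (hz : r z < 0) t
    rcases eq_or_ne t 0 with rfl | ht
    · rw [levi_zero]
    · have hpos := mul_pos (blowupProfileDeriv_pos hz) (hspsh z (hclU (subset_closure hz)) t ht)
      exact hpos.le.trans (blowupProfileDeriv_mul_levi_le hr2 hz t)
  · intro p hp M _
    have hrp : r p = 0 := frontier_lt_subset_eq hr.continuous continuous_const hp
    obtain ⟨δ, hδ, h⟩ := Metric.eventually_nhds_iff.1 (eventually_nhdsWithin_iff.1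
      (eventually_mul_norm_sq_le_levi_blowupProfile hr2 hrp (hspsh p (hclU hp.1)) M))
    exact ⟨δ, hδ, fun z hz hzp => h (by rwa [dist_eq_norm]) hz⟩

/-- on a smoothly bounded domain with a strictly plurisubharmonic defining
function, there is a bounded smooth plurisubharmonic function whose complex Hessian blows up
at every boundary point. -/
theorem stmt11 {n : ℕ} (r : Cn n → ℝ) (hr : ContDiff ℝ (⊤ : ℕ∞) r)
    (Ω : Set (Cn n)) (hΩdef : Ω = {z | r z < 0}) (hne : Ω.Nonempty)
    (hgrad : ∀ z, r z = 0 → fderiv ℝ r z ≠ 0)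
    (U : Set (Cn n)) (hU : IsOpen U) (hclU : closure Ω ⊆ U)
    (hspsh : ∀ z ∈ U, ∀ t : Cn n, t ≠ 0 → 0 < levi r z t) :
    ∃ C : ℝ, 0 < C ∧ ∃ φ : Cn n → ℝ,
      ContDiffOn ℝ (⊤ : ℕ∞) φ Ω ∧
      (∀ z ∈ Ω, 0 ≤ φ z ∧ φ z ≤ C) ∧
      (∀ z ∈ Ω, ∀ t : Cn n, 0 ≤ levi φ z t) ∧
      (∀ p ∈ frontier Ω, ∀ M : ℝ, 0 < M → ∃ δ : ℝ, 0 < δ ∧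
        ∀ z ∈ Ω, ‖z - p‖ < δ → ∀ t : Cn n, M * ‖t‖^2 ≤ levi φ z t) :=
  stmt11_general r hr Ω hΩdef U hclU hspsh
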